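/- Let (U,V) be a complete hereditary cotorsion pair in Mod-A that is weakly right periodic, and let V be a module in V of finite U-projective dimension. Then the injective dimension of V satisfies id_A V ≤ max{relspli(U), relFPD(U)}. -/

import Mathlib

universe u

open CategoryTheory Limits

namespace OSG

variable (A : Type u) [Ring A]

/-- `Ext¹_A(M,N) = 0`: every short exact sequence `0 → N → E → M → 0` splits. -/
def Ext1Zero (M N : ModuleCat.{u} A) : Prop :=
  ∀ (E : ModuleCat.{u} A) (i : N ⟶ E) (p : E ⟶ M),
    Function.Injective i → Function.Surjective p →
      LinearMap.range i.hom = LinearMap.ker p.hom → ∃ r : E ⟶ N, i ≫ r = 𝟙 N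

/-- `Ext^{n+1}_A(M,N) = 0`, expressed by dimension shifting along projective resolutions. -/
def ExtZeroSucc (n : ℕ) (M N : ModuleCat.{u} A) : Prop :=
  ∀ P : ProjectiveResolution M, Ext1Zero A (cokernel (P.complex.d (n + 1) n)) N

def IsCotorsionPair (U V : Set (ModuleCat.{u} A)) : Prop :=
  U = {M | ∀ N ∈ V, Ext1Zero A M N} ∧ V = {N | ∀ M ∈ U, Ext1Zero A M N}

/-- Every module has a special `U`-precover and a special `V`-preenvelope. -/
def IsCompletePair (U V : Set (ModuleCat.{u} A)) : Prop :=
  (∀ M : ModuleCat.{u} A, ∃ (K U₀ : ModuleCat.{u} A) (j : K ⟶ U₀) (p : U₀ ⟶ M),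
      U₀ ∈ U ∧ K ∈ V ∧ Function.Injective j ∧ Function.Surjective p ∧
        LinearMap.range j.hom = LinearMap.ker p.hom) ∧
  (∀ M : ModuleCat.{u} A, ∃ (V₀ C : ModuleCat.{u} A) (ι : M ⟶ V₀) (q : V₀ ⟶ C),
      V₀ ∈ V ∧ C ∈ U ∧ Function.Injective ι ∧ Function.Surjective q ∧
        LinearMap.range ι.hom = LinearMap.ker q.hom)

def IsHereditaryPair (U V : Set (ModuleCat.{u} A)) : Prop :=
  ∀ M ∈ U, ∀ N ∈ V, ∀ n : ℕ, ExtZeroSucc A n M N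

def leftPerp (C : Set (ModuleCat.{u} A)) : Set (ModuleCat.{u} A) :=
  {M | ∀ N ∈ C, Ext1Zero A M N}

def rightPerp (C : Set (ModuleCat.{u} A)) : Set (ModuleCat.{u} A) :=
  {N | ∀ M ∈ C, Ext1Zero A M N}

def GeneratedBySet (V : Set (ModuleCat.{u} A)) : Prop :=
  ∃ S : Set (ModuleCat.{u} A), V = rightPerp A S

/-- `M` has a resolution `0 → U_n → ⋯ → U_0 → M → 0` with all `U_i ∈ U`
(i.e. `U`-projective dimension at most `n`). -/
def ResLE (U : Set (ModuleCat.{u} A)) : ℕ → ModuleCat.{u} A → Prop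
  | 0, M => M ∈ U
  | n + 1, M =>
    ResLE U n M ∨
      ∃ (K U₀ : ModuleCat.{u} A) (j : K ⟶ U₀) (p : U₀ ⟶ M),
        U₀ ∈ U ∧ Function.Injective j ∧ Function.Surjective p ∧
          LinearMap.range j.hom = LinearMap.ker p.hom ∧ ResLE U n K

/-- `M` has a coresolution `0 → M → V^0 → ⋯ → V^n → 0` with all `V^i ∈ V`
(i.e. `V`-injective dimension at most `n`). -/
def CoresLE (V : Set (ModuleCat.{u} A)) : ℕ → ModuleCat.{u} A → Prop
  | 0, M => M ∈ V
  | n + 1, M =>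
    CoresLE V n M ∨
      ∃ (V₀ C : ModuleCat.{u} A) (ι : M ⟶ V₀) (q : V₀ ⟶ C),
        V₀ ∈ V ∧ Function.Injective ι ∧ Function.Surjective q ∧
          LinearMap.range ι.hom = LinearMap.ker q.hom ∧ CoresLE V n C

/-- The `U`-projective dimension of `M`, as an extended natural number. -/
noncomputable def resDim (U : Set (ModuleCat.{u} A)) (M : ModuleCat.{u} A) : ℕ∞ :=
  sInf {c : ℕ∞ | ∃ n : ℕ, c = n ∧ ResLE A U n M}

/-- The `V`-injective dimension of `M`, as an extended natural number. -/
noncomputable def coresDim (V : Set (ModuleCat.{u} A)) (M : ModuleCat.{u} A) : ℕ∞ :=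
  sInf {c : ℕ∞ | ∃ n : ℕ, c = n ∧ CoresLE A V n M}

def prjClass : Set (ModuleCat.{u} A) := {M | Projective M}

def injClass : Set (ModuleCat.{u} A) := {M | Injective M}

section Complexes

/-- The complex `T` is acyclic (exact everywhere). -/
def Acyclic (T : ChainComplex (ModuleCat.{u} A) ℤ) : Prop := ∀ n : ℤ, T.ExactAt n

/-- The complex `Hom_A(E, T)` is acyclic. -/
def HomIntoExact (E : ModuleCat.{u} A) (T : ChainComplex (ModuleCat.{u} A) ℤ) : Prop :=
  ∀ (n : ℤ) (f : E ⟶ T.X n), f ≫ T.d n (n - 1) = 0 →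
    ∃ g : E ⟶ T.X (n + 1), g ≫ T.d (n + 1) n = f

/-- The complex `Hom_A(T, W)` is acyclic. -/
def HomFromExact (T : ChainComplex (ModuleCat.{u} A) ℤ) (W : ModuleCat.{u} A) : Prop :=
  ∀ (n : ℤ) (f : T.X n ⟶ W), T.d (n + 1) n ≫ f = 0 →
    ∃ g : T.X (n - 1) ⟶ W, T.d n (n - 1) ≫ g = f

/-- `M` is a Gorenstein injective `A`-module. -/
def GorensteinInjective (M : ModuleCat.{u} A) : Prop :=
  ∃ T : ChainComplex (ModuleCat.{u} A) ℤ,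
    (∀ n, Injective (T.X n)) ∧ Acyclic A T ∧
      (∀ E : ModuleCat.{u} A, Injective E → HomIntoExact A E T) ∧
      ∃ n : ℤ, Nonempty (M ≅ T.cycles n)

/-- `M` is a Gorenstein projective `A`-module. -/
def GorensteinProjective (M : ModuleCat.{u} A) : Prop :=
  ∃ T : ChainComplex (ModuleCat.{u} A) ℤ,
    (∀ n, Projective (T.X n)) ∧ Acyclic A T ∧
      (∀ Q : ModuleCat.{u} A, Projective Q → HomFromExact A T Q) ∧
      ∃ n : ℤ, Nonempty (M ≅ T.cycles n)

end Complexes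
section Tensor

/-- The balancing relations inside `N ⊗_ℤ M` for a right module `N` and a left module `M`. -/
def balRel (N : ModuleCat.{u} Aᵐᵒᵖ) (M : ModuleCat.{u} A) :
    Submodule ℤ (TensorProduct ℤ N M) :=
  Submodule.span ℤ
    {x | ∃ (n : N) (a : A) (m : M),
      x = (MulOpposite.op a • n) ⊗ₜ[ℤ] m - n ⊗ₜ[ℤ] (a • m)}

/-- The tensor product `N ⊗_A M` of a right `A`-module and a left `A`-module. -/
def balTensor (N : ModuleCat.{u} Aᵐᵒᵖ) (M : ModuleCat.{u} A) : Type u :=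
  TensorProduct ℤ N M ⧸ balRel A N M

noncomputable instance (N : ModuleCat.{u} Aᵐᵒᵖ) (M : ModuleCat.{u} A) :
    AddCommGroup (balTensor A N M) :=
  inferInstanceAs (AddCommGroup (TensorProduct ℤ N M ⧸ balRel A N M))

noncomputable instance (N : ModuleCat.{u} Aᵐᵒᵖ) (M : ModuleCat.{u} A) :
    Module ℤ (balTensor A N M) :=
  inferInstanceAs (Module ℤ (TensorProduct ℤ N M ⧸ balRel A N M))

/-- The map `N ⊗_A M → N ⊗_A M'` induced by `f : M → M'`. -/
noncomputable def balMap (N : ModuleCat.{u} Aᵐᵒᵖ) {M M' : ModuleCat.{u} A} (f : M ⟶ M') :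
    balTensor A N M →ₗ[ℤ] balTensor A N M' :=
  Submodule.mapQ (balRel A N M) (balRel A N M')
    (LinearMap.lTensor (R := ℤ) N f.hom.toAddMonoidHom.toIntLinearMap)
    (by
      unfold balRel
      rw [Submodule.span_le]
      rintro x ⟨n, a, m, rfl⟩
      simp only [SetLike.mem_coe, Submodule.mem_comap, map_sub, LinearMap.lTensor_tmul]
      have h : f.hom.toAddMonoidHom.toIntLinearMap (a • m) = a • f.hom.toAddMonoidHom.toIntLinearMap m :=
        f.hom.map_smul a m
      erw [Submodule.mem_comap, map_sub, LinearMap.lTensor_tmul, LinearMap.lTensor_tmul]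
      rw [h]
      exact Submodule.subset_span ⟨n, a, f.hom.toAddMonoidHom.toIntLinearMap m, rfl⟩)

/-- The map `N ⊗_A M → N' ⊗_A M` induced by `g : N → N'`. -/
noncomputable def balMapR {N N' : ModuleCat.{u} Aᵐᵒᵖ} (g : N ⟶ N') (M : ModuleCat.{u} A) :
    balTensor A N M →ₗ[ℤ] balTensor A N' M :=
  Submodule.mapQ (balRel A N M) (balRel A N' M)
    (LinearMap.rTensor (R := ℤ) M g.hom.toAddMonoidHom.toIntLinearMap)
    (by
      unfold balRel
      rw [Submodule.span_le]
      rintro x ⟨n, a, m, rfl⟩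
      simp only [SetLike.mem_coe, Submodule.mem_comap, map_sub, LinearMap.rTensor_tmul]
      have h : g.hom.toAddMonoidHom.toIntLinearMap (MulOpposite.op a • n) =
          MulOpposite.op a • g.hom.toAddMonoidHom.toIntLinearMap n :=
        g.hom.map_smul (MulOpposite.op a) n
      erw [Submodule.mem_comap, map_sub, LinearMap.rTensor_tmul, LinearMap.rTensor_tmul]
      rw [h]
      exact Submodule.subset_span ⟨g.hom.toAddMonoidHom.toIntLinearMap n, a, m, rfl⟩)

/-- A left `A`-module `M` is flat if `− ⊗_A M` preserves injections of right `A`-modules. -/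
def FlatM (M : ModuleCat.{u} A) : Prop :=
  ∀ (N N' : ModuleCat.{u} Aᵐᵒᵖ) (g : N ⟶ N'), Function.Injective g →
    Function.Injective (balMapR A g M)

def flatClass : Set (ModuleCat.{u} A) := {M | FlatM A M}

/-- `M` is cotorsion if `Ext¹_A(F,M) = 0` for every flat module `F`. -/
def cotClass : Set (ModuleCat.{u} A) := {M | ∀ F ∈ flatClass A, Ext1Zero A F M}

end Tensor
section Rest

variable (A : Type u) [Ring A]

/-- Exactness of `N ⊗_A T` at spot `n`. -/
def TensorExactAt (N : ModuleCat.{u} Aᵐᵒᵖ) (T : ChainComplex (ModuleCat.{u} A) ℤ)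
    (n : ℤ) : Prop :=
  LinearMap.range (balMap A N (T.d (n + 1) n)) = LinearMap.ker (balMap A N (T.d n (n - 1)))

/-- `M` is a Gorenstein flat `A`-module. -/
def GorensteinFlat (M : ModuleCat.{u} A) : Prop :=
  ∃ T : ChainComplex (ModuleCat.{u} A) ℤ,
    (∀ n, T.X n ∈ flatClass A) ∧ Acyclic A T ∧
      (∀ N : ModuleCat.{u} Aᵐᵒᵖ, Injective N → ∀ n : ℤ, TensorExactAt A N T n) ∧
      ∃ n : ℤ, Nonempty (M ≅ T.cycles n)

def gprjClass : Set (ModuleCat.{u} A) := {M | GorensteinProjective A M}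
def ginjClass : Set (ModuleCat.{u} A) := {M | GorensteinInjective A M}
def gflatClass : Set (ModuleCat.{u} A) := {M | GorensteinFlat A M}

/-- projective dimension -/
noncomputable def pdim (M : ModuleCat.{u} A) : ℕ∞ := resDim A (prjClass A) M
/-- injective dimension -/
noncomputable def idim (M : ModuleCat.{u} A) : ℕ∞ := coresDim A (injClass A) M
/-- flat dimension -/
noncomputable def fdim (M : ModuleCat.{u} A) : ℕ∞ := resDim A (flatClass A) M
/-- Gorenstein projective dimension -/
noncomputable def gpdim (M : ModuleCat.{u} A) : ℕ∞ := resDim A (gprjClass A) M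
/-- Gorenstein injective dimension -/
noncomputable def gidim (M : ModuleCat.{u} A) : ℕ∞ := coresDim A (ginjClass A) M
/-- Gorenstein flat dimension -/
noncomputable def gfdim (M : ModuleCat.{u} A) : ℕ∞ := resDim A (gflatClass A) M

noncomputable def spli : ℕ∞ := ⨆ (I : ModuleCat.{u} A) (_ : Injective I), pdim A I
noncomputable def silp : ℕ∞ := ⨆ (P : ModuleCat.{u} A) (_ : Projective P), idim A P
noncomputable def sfli : ℕ∞ := ⨆ (I : ModuleCat.{u} A) (_ : Injective I), fdim A I
noncomputable def splf : ℕ∞ := ⨆ (F : ModuleCat.{u} A) (_ : F ∈ flatClass A), pdim A F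

noncomputable def FPD : ℕ∞ := ⨆ (M : ModuleCat.{u} A) (_ : pdim A M ≠ ⊤), pdim A M
noncomputable def FID : ℕ∞ := ⨆ (M : ModuleCat.{u} A) (_ : idim A M ≠ ⊤), idim A M
noncomputable def FFD : ℕ∞ := ⨆ (M : ModuleCat.{u} A) (_ : fdim A M ≠ ⊤), fdim A M

/-- Gorenstein global dimension. -/
noncomputable def Ggldim : ℕ∞ := ⨆ (M : ModuleCat.{u} A), gpdim A M
/-- Gorenstein weak global dimension. -/
noncomputable def Gwgldim : ℕ∞ := ⨆ (M : ModuleCat.{u} A), gfdim A M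

/-- sup of `U`-projective dimensions of injective modules. -/
noncomputable def relspli (U : Set (ModuleCat.{u} A)) : ℕ∞ :=
  ⨆ (I : ModuleCat.{u} A) (_ : Injective I), resDim A U I
/-- sup of `V`-injective dimensions of projective modules. -/
noncomputable def relsilp (V : Set (ModuleCat.{u} A)) : ℕ∞ :=
  ⨆ (P : ModuleCat.{u} A) (_ : Projective P), coresDim A V P
/-- finitistic `U`-projective dimension. -/
noncomputable def relFPD (U : Set (ModuleCat.{u} A)) : ℕ∞ :=
  ⨆ (M : ModuleCat.{u} A) (_ : resDim A U M ≠ ⊤), resDim A U M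
/-- finitistic `V`-injective dimension. -/
noncomputable def relFID (V : Set (ModuleCat.{u} A)) : ℕ∞ :=
  ⨆ (M : ModuleCat.{u} A) (_ : coresDim A V M ≠ ⊤), coresDim A V M

/-- Every acyclic complex of injectives has cycles in `V`. -/
def WeaklyRightPeriodic (V : Set (ModuleCat.{u} A)) : Prop :=
  ∀ T : ChainComplex (ModuleCat.{u} A) ℤ,
    (∀ n, Injective (T.X n)) → Acyclic A T → ∀ n : ℤ, T.cycles n ∈ V

/-- Every acyclic complex of projectives has cycles in `U`. -/
def WeaklyLeftPeriodic (U : Set (ModuleCat.{u} A)) : Prop :=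
  ∀ T : ChainComplex (ModuleCat.{u} A) ℤ,
    (∀ n, Projective (T.X n)) → Acyclic A T → ∀ n : ℤ, T.cycles n ∈ U

/-- A right `U`-totally acyclic complex witnesses a right `U`-Gorenstein module. -/
def RightGorenstein (U V : Set (ModuleCat.{u} A)) : Set (ModuleCat.{u} A) :=
  {M | ∃ T : ChainComplex (ModuleCat.{u} A) ℤ,
    (∀ n, T.X n ∈ U) ∧ Acyclic A T ∧ (∀ n : ℤ, T.cycles n ∈ V) ∧
      (∀ W ∈ U ∩ V, HomFromExact A T W) ∧ Nonempty (M ≅ cokernel (T.d 1 0))}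

/-- acyclic with all cycles in `V`. -/
def VAcyclicCx (V : Set (ModuleCat.{u} A)) (W : ChainComplex (ModuleCat.{u} A) ℤ) : Prop :=
  Acyclic A W ∧ ∀ n : ℤ, W.cycles n ∈ V

/-- acyclic with all cycles in `U`. -/
def UAcyclicCx (U : Set (ModuleCat.{u} A)) (W : ChainComplex (ModuleCat.{u} A) ℤ) : Prop :=
  Acyclic A W ∧ ∀ n : ℤ, W.cycles n ∈ U

/-- A complex of modules in `U` is semi-`U` if every chain map to a `V`-acyclic
complex is null-homotopic (equivalently, `Hom(X,W)` is acyclic for `V`-acyclic `W`). -/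
def SemiU (U V : Set (ModuleCat.{u} A)) (X : ChainComplex (ModuleCat.{u} A) ℤ) : Prop :=
  (∀ n, X.X n ∈ U) ∧
    ∀ W : ChainComplex (ModuleCat.{u} A) ℤ, VAcyclicCx A V W →
      ∀ f : X ⟶ W, Nonempty (Homotopy f 0)

/-- A complex of modules in `V` is semi-`V` if every chain map from a `U`-acyclic
complex to it is null-homotopic. -/
def SemiV (U V : Set (ModuleCat.{u} A)) (Y : ChainComplex (ModuleCat.{u} A) ℤ) : Prop :=
  (∀ n, Y.X n ∈ V) ∧
    ∀ T : ChainComplex (ModuleCat.{u} A) ℤ, UAcyclicCx A U T →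
      ∀ f : T ⟶ Y, Nonempty (Homotopy f 0)

/-- `W` is isomorphic to the module `M` in the derived category. -/
def IsReplacementOf (W : ChainComplex (ModuleCat.{u} A) ℤ) (M : ModuleCat.{u} A) : Prop :=
  (∀ n : ℤ, n ≠ 0 → W.ExactAt n) ∧ Nonempty (W.homology 0 ≅ M)

/-- `RGor_U`-projective dimension of `M` is at most `n`: some semi-`U`-`V` replacement `W`
of `M` has `Coker(W_{n+1} → W_n)` right `U`-Gorenstein. -/
def RGorpdLE (U V : Set (ModuleCat.{u} A)) (n : ℕ) (M : ModuleCat.{u} A) : Prop :=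
  ∃ W : ChainComplex (ModuleCat.{u} A) ℤ,
    SemiU A U V W ∧ SemiV A U V W ∧ IsReplacementOf A W M ∧
      cokernel (W.d ((n : ℤ) + 1) (n : ℤ)) ∈ RightGorenstein A U V

/-- The `RGor_U`-projective dimension. -/
noncomputable def rgorDim (U V : Set (ModuleCat.{u} A)) (M : ModuleCat.{u} A) : ℕ∞ :=
  sInf {c : ℕ∞ | ∃ n : ℕ, c = n ∧ RGorpdLE A U V n M}

/-- The `RGor_U` relative Gorenstein global dimension. -/
noncomputable def rgorGldim (U V : Set (ModuleCat.{u} A)) : ℕ∞ :=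
  ⨆ (M : ModuleCat.{u} A), rgorDim A U V M

/-- The Gorenstein flat-cotorsion dimension. -/
noncomputable def gfcDim (M : ModuleCat.{u} A) : ℕ∞ :=
  rgorDim A (flatClass A) (cotClass A) M

/-- The Gorenstein flat-cotorsion global dimension. -/
noncomputable def Gfcgldim : ℕ∞ := rgorGldim A (flatClass A) (cotClass A)

/-- `A` is right weak coherent: products of flat left `A`-modules have finite
flat dimension. -/
def RightWeakCoherent : Prop :=
  ∀ (ι : Type u) (F : ι → ModuleCat.{u} A), (∀ i, F i ∈ flatClass A) →
    fdim A (ModuleCat.of A ((i : ι) → F i)) ≠ ⊤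

/-- `A` is left `ℵ₀`-noetherian: every left ideal is countably generated. -/
def Aleph0Noetherian : Prop :=
  ∀ I : Ideal A, ∃ s : Set A, s.Countable ∧ Ideal.span s = I

end Rest

/-!
`Ext^{n+1}(X, Y) = 0` is encoded as `Ext¹(X, Ωⁿ Y) = 0`, where `Ωⁿ Y` is the `n`-th cosyzygy
of `Y` along chosen injective hulls; the pieces of the long exact `Ext`-sequence that are used
become diagram chases with lifts through `I(W) ↠ Ω W`.

For a complete hereditary pair, `X` has a `U`-resolution of length `n` iff
`Ext^{n+1}(X, V) = 0`. Hence, as injectives have `U`-projective dimension at most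
`s = relspli(U)`, every cosyzygy of `N` has finite `U`-projective dimension, thus at most
`f = relFPD(U)`. For `m = max s f` this gives
`Ext¹(Ω^{m+1} N, Ωᵐ N) = Ext^{m+1}(Ω^{m+1} N, N) = 0` because `N ∈ V`, so the sequence
`0 → Ωᵐ N → I(Ωᵐ N) → Ω^{m+1} N → 0` splits, `Ωᵐ N` is injective and `id N ≤ m`.
-/

section

variable {A}

structure IsShortExact {X Y Z : ModuleCat.{u} A} (i : X ⟶ Y) (p : Y ⟶ Z) : Prop where
  injective : Function.Injective i
  surjective : Function.Surjective p
  range_eq_ker : LinearMap.range i.hom = LinearMap.ker p.hom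

namespace IsShortExact

variable {X Y Z T : ModuleCat.{u} A} {i : X ⟶ Y} {p : Y ⟶ Z}

lemma mono (h : IsShortExact i p) : Mono i := (ModuleCat.mono_iff_injective i).2 h.injective

lemma epi (h : IsShortExact i p) : Epi p := (ModuleCat.epi_iff_surjective p).2 h.surjective

lemma comp_eq_zero (h : IsShortExact i p) : i ≫ p = 0 := by
  ext x
  exact (h.range_eq_ker ▸ LinearMap.mem_range_self i.hom x : i x ∈ LinearMap.ker p.hom)

lemma exact (h : IsShortExact i p) : (ShortComplex.mk i p h.comp_eq_zero).Exact :=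
  (ShortComplex.moduleCat_exact_iff_range_eq_ker _).2 h.range_eq_ker

lemma exists_lift (h : IsShortExact i p) (φ : T ⟶ Y) (hφ : φ ≫ p = 0) :
    ∃ l, l ≫ i = φ :=
  have := h.mono
  h.exact.lift' φ hφ

lemma exists_desc (h : IsShortExact i p) (ψ : Y ⟶ T) (hψ : i ≫ ψ = 0) :
    ∃ d, p ≫ d = ψ :=
  have := h.epi
  h.exact.desc' ψ hψ

lemma exists_section_of_retraction (h : IsShortExact i p) {r : Y ⟶ X} (hr : i ≫ r = 𝟙 X) :
    ∃ s : Z ⟶ Y, s ≫ p = 𝟙 Z :=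
  ⟨_, (ShortComplex.Splitting.ofExactOfRetraction _ h.exact r hr h.epi).s_g⟩

lemma exists_retraction_of_section (h : IsShortExact i p) {s : Z ⟶ Y} (hs : s ≫ p = 𝟙 Z) :
    ∃ r : Y ⟶ X, i ≫ r = 𝟙 X :=
  ⟨_, (ShortComplex.Splitting.ofExactOfSection _ h.exact s hs h.mono).f_r⟩

lemma exists_retraction_of_ext1Zero (h : IsShortExact i p) (hZ : Ext1Zero A Z X) :
    ∃ r : Y ⟶ X, i ≫ r = 𝟙 X :=
  hZ Y i p h.injective h.surjective h.range_eq_ker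

end IsShortExact

lemma ext1Zero_of_forall_isShortExact {M X : ModuleCat.{u} A}
    (h : ∀ (E : ModuleCat.{u} A) (i : X ⟶ E) (p : E ⟶ M),
      IsShortExact i p → ∃ r, i ≫ r = 𝟙 X) :
    Ext1Zero A M X :=
  fun E i p hi hp hk => h E i p ⟨hi, hp, hk⟩

lemma ext1Zero_of_projective {P : ModuleCat.{u} A} [Projective P] (X : ModuleCat.{u} A) :
    Ext1Zero A P X :=
  ext1Zero_of_forall_isShortExact fun _ _ p h =>
    have := h.epi
    h.exists_retraction_of_section (Projective.factorThru_comp (𝟙 P) p)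

namespace IsShortExact

variable {X Y Z M : ModuleCat.{u} A} {ι : X ⟶ Y} {π : Y ⟶ Z}

lemma exists_pullback (h : IsShortExact ι π) (f : M ⟶ Z) :
    ∃ (P : ModuleCat.{u} A) (i : X ⟶ P) (q : P ⟶ M) (g : P ⟶ Y),
      IsShortExact i q ∧ g ≫ π = q ≫ f := by
  let P := LinearMap.ker (π.hom ∘ₗ LinearMap.fst A Y M - f.hom ∘ₗ LinearMap.snd A Y M)
  have mem_P (y : Y) (m : M) : (y, m) ∈ P ↔ π y = f m := by simp [P, sub_eq_zero]
  let i : X ⟶ ModuleCat.of A P := ModuleCat.ofHom <| LinearMap.codRestrict P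
    (LinearMap.inl A Y M ∘ₗ ι.hom) fun x => (mem_P _ _).2 <| by
      simpa using ConcreteCategory.congr_hom h.comp_eq_zero x
  let q : ModuleCat.of A P ⟶ M := ModuleCat.ofHom (LinearMap.snd A Y M ∘ₗ P.subtype)
  refine ⟨ModuleCat.of A P, i, q, ModuleCat.ofHom (LinearMap.fst A Y M ∘ₗ P.subtype),
    ⟨fun x₁ x₂ hx => h.injective (congrArg (fun z : P => z.1.1) hx), fun m => ?_, ?_⟩, ?_⟩
  · obtain ⟨y, hy⟩ := h.surjective (f m)
    exact ⟨⟨(y, m), (mem_P _ _).2 hy⟩, rfl⟩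
  · ext ⟨⟨y, m⟩, hym⟩
    simp only [LinearMap.mem_range, LinearMap.mem_ker]
    constructor
    · rintro ⟨x, hx⟩
      exact congrArg (fun z : P => z.1.2) hx.symm
    · intro (hm : m = 0)
      subst hm
      have hy : y ∈ LinearMap.ker π.hom := by simpa using (mem_P _ _).1 hym
      obtain ⟨x, rfl⟩ := h.range_eq_ker ▸ hy
      exact ⟨x, rfl⟩
  · ext ⟨⟨y, m⟩, hym⟩
    exact (mem_P y m).1 hym

lemma exists_lift_of_ext1Zero (h : IsShortExact ι π) (hM : Ext1Zero A M X) (f : M ⟶ Z) :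
    ∃ g : M ⟶ Y, g ≫ π = f := by
  obtain ⟨P, i, q, g, hiq, hg⟩ := h.exists_pullback f
  obtain ⟨r, hr⟩ := hiq.exists_retraction_of_ext1Zero hM
  obtain ⟨s, hs⟩ := hiq.exists_section_of_retraction hr
  exact ⟨s ≫ g, by rw [Category.assoc, hg, ← Category.assoc, hs, Category.id_comp]⟩

lemma ext1Zero_of_forall_lift [Injective Y] (h : IsShortExact ι π)
    (hlift : ∀ f : M ⟶ Z, ∃ g : M ⟶ Y, g ≫ π = f) : Ext1Zero A M X := by
  refine ext1Zero_of_forall_isShortExact fun E a p hap => ?_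
  have := hap.mono
  have := h.mono
  obtain ⟨φ, hφ⟩ := Injective.factors ι a
  obtain ⟨f, hf⟩ := hap.exists_desc (φ ≫ π) <| by
    rw [← Category.assoc, hφ, h.comp_eq_zero]
  obtain ⟨g, hg⟩ := hlift f
  obtain ⟨r, hr⟩ := h.exists_lift (φ - p ≫ g) (by simp [hf, hg])
  refine ⟨r, ?_⟩
  rw [← cancel_mono ι, Category.assoc, hr, Preadditive.comp_sub, hφ,
    reassoc_of% hap.comp_eq_zero]
  simp

end IsShortExact

noncomputable def cosyzygy (X : ModuleCat.{u} A) : ModuleCat.{u} A := cokernel (Injective.ι X)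

noncomputable def toCosyzygy (X : ModuleCat.{u} A) : Injective.under X ⟶ cosyzygy X :=
  cokernel.π (Injective.ι X)

lemma isShortExact_cosyzygy (X : ModuleCat.{u} A) :
    IsShortExact (Injective.ι X) (toCosyzygy X) :=
  ⟨(ModuleCat.mono_iff_injective _).1 inferInstance,
    (ModuleCat.epi_iff_surjective _).1 (inferInstanceAs (Epi (cokernel.π _))),
    (ShortComplex.cokernelSequence_exact (Injective.ι X)).moduleCat_range_eq_ker⟩

lemma ext1Zero_iff_forall_lift {M X : ModuleCat.{u} A} :
    Ext1Zero A M X ↔ ∀ f : M ⟶ cosyzygy X, ∃ g, g ≫ toCosyzygy X = f :=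
  ⟨(isShortExact_cosyzygy X).exists_lift_of_ext1Zero,
    (isShortExact_cosyzygy X).ext1Zero_of_forall_lift⟩

lemma injective_of_ext1Zero_cosyzygy {X : ModuleCat.{u} A} (h : Ext1Zero A (cosyzygy X) X) : Injective X :=
  let ⟨r, hr⟩ := (isShortExact_cosyzygy X).exists_retraction_of_ext1Zero h
  Retract.injective ⟨Injective.ι X, r, hr⟩

namespace IsShortExact

variable {K B C W : ModuleCat.{u} A} {a : K ⟶ B} {b : B ⟶ C}

lemma exists_extend_of_ext1Zero (h : IsShortExact a b) (hC : Ext1Zero A C W) (φ : K ⟶ W) :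
    ∃ H : B ⟶ W, a ≫ H = φ := by
  have hW := isShortExact_cosyzygy W
  have := h.mono
  have := hW.mono
  obtain ⟨F, hF⟩ := Injective.factors (φ ≫ Injective.ι W) a
  obtain ⟨d, hd⟩ := h.exists_desc (F ≫ toCosyzygy W) <| by
    rw [reassoc_of% hF, hW.comp_eq_zero, Limits.comp_zero]
  obtain ⟨g, hg⟩ := hW.exists_lift_of_ext1Zero hC d
  obtain ⟨H, hH⟩ := hW.exists_lift (F - b ≫ g) (by simp [hg, hd])
  refine ⟨H, ?_⟩
  rw [← cancel_mono (Injective.ι W), Category.assoc, hH, Preadditive.comp_sub, hF,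
    reassoc_of% h.comp_eq_zero]
  simp

/-- Exactness of `Ext¹(B, W) → Ext¹(K, W) → Ext²(C, W)`. -/
lemma ext1Zero_left (h : IsShortExact a b) (hB : Ext1Zero A B W)
    (hC : Ext1Zero A C (cosyzygy W)) : Ext1Zero A K W :=
  ext1Zero_iff_forall_lift.2 fun f => by
    obtain ⟨F, hF⟩ := h.exists_extend_of_ext1Zero hC f
    obtain ⟨G, hG⟩ := ext1Zero_iff_forall_lift.1 hB F
    exact ⟨a ≫ G, by rw [Category.assoc, hG, hF]⟩

/-- Exactness of `Ext¹(K, W) → Ext²(C, W) → Ext²(B, W)`. -/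
lemma ext1Zero_cosyzygy_right (h : IsShortExact a b) (hK : Ext1Zero A K W)
    (hB : Ext1Zero A B (cosyzygy W)) : Ext1Zero A C (cosyzygy W) := by
  have hW := isShortExact_cosyzygy W
  have hW' := isShortExact_cosyzygy (cosyzygy W)
  have := h.mono
  have := h.epi
  refine ext1Zero_iff_forall_lift.2 fun f => ?_
  obtain ⟨g, hg⟩ := ext1Zero_iff_forall_lift.1 hB (b ≫ f)
  obtain ⟨k, hk⟩ := hW'.exists_lift (a ≫ g) <| by
    rw [Category.assoc, hg, reassoc_of% h.comp_eq_zero, Limits.zero_comp]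
  obtain ⟨l, hl⟩ := ext1Zero_iff_forall_lift.1 hK k
  obtain ⟨L, hL⟩ := Injective.factors l a
  obtain ⟨d, hd⟩ := h.exists_desc (g - L ≫ toCosyzygy W ≫ Injective.ι (cosyzygy W))
    (by rw [Preadditive.comp_sub, reassoc_of% hL, reassoc_of% hl, hk, sub_self])
  refine ⟨d, ?_⟩
  rw [← cancel_epi b, reassoc_of% hd, Preadditive.sub_comp, hg, Category.assoc, Category.assoc,
    hW'.comp_eq_zero]
  simp

end IsShortExact

lemma isShortExact_syzygy {M : ModuleCat.{u} A} (P : ProjectiveResolution M) :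
    IsShortExact
      (cokernel.desc (P.complex.d (1 + 1) 1) (P.complex.d 1 0) (P.complex.d_comp_d _ _ _))
      (P.π.f 0) := by
  have hπ : Function.Surjective (cokernel.π (P.complex.d (1 + 1) 1)) :=
    (ModuleCat.epi_iff_surjective _).1 inferInstance
  refine ⟨(ModuleCat.mono_iff_injective _).1 (P.exact_succ 0).mono_cokernelDesc,
    (ModuleCat.epi_iff_surjective _).1 inferInstance, ?_⟩
  rw [← (ShortComplex.exact_of_g_is_cokernel (ShortComplex.mk _ _ P.complex_d_comp_π_f_zero)
      P.isColimitCokernelCofork).moduleCat_range_eq_ker,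
    ← LinearMap.range_comp_of_range_eq_top _ (LinearMap.range_eq_top.2 hπ),
    ← ModuleCat.hom_comp, cokernel.π_desc]

noncomputable def iterCosyzygy (n : ℕ) (X : ModuleCat.{u} A) : ModuleCat.{u} A := cosyzygy^[n] X

lemma iterCosyzygy_succ (n : ℕ) (X : ModuleCat.{u} A) :
    iterCosyzygy (n + 1) X = cosyzygy (iterCosyzygy n X) :=
  Function.iterate_succ_apply' _ n X

section Dimension

variable {U : Set (ModuleCat.{u} A)} {X : ModuleCat.{u} A} {n : ℕ}

lemma ResLE.mono {m : ℕ} (h : ResLE A U n X) (hnm : n ≤ m) : ResLE A U m X := by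
  induction m, hnm using Nat.le_induction with
  | base => exact h
  | succ m _ ih => exact Or.inl ih

lemma resDim_le_of_resLE (h : ResLE A U n X) : resDim A U X ≤ n :=
  sInf_le ⟨n, rfl, h⟩

lemma resLE_of_resDim_le (h : resDim A U X ≤ n) : ResLE A U n X := by
  obtain ⟨_, ⟨m, rfl, hm⟩, hmn⟩ :=
    sInf_lt_iff.1 (h.trans_lt (ENat.natCast_lt_natCast.2 n.lt_succ_self))
  exact hm.mono (Nat.lt_succ_iff.1 (ENat.natCast_lt_natCast.1 hmn))

lemma exists_resLE_of_resDim_ne_top (h : resDim A U X ≠ ⊤) : ∃ n, ResLE A U n X :=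
  ⟨_, resLE_of_resDim_le (ENat.natCast_toNat h).ge⟩

lemma resLE_of_injective_of_relspli_le (hs : relspli A U ≤ n) [Injective X] :
    ResLE A U n X :=
  resLE_of_resDim_le <| le_trans
    (le_iSup₂ (f := fun (I : ModuleCat.{u} A) (_ : Injective I) => resDim A U I) X ‹_›) hs

lemma resLE_of_relFPD_le {m : ℕ} (hf : relFPD A U ≤ n) (hX : ResLE A U m X) : ResLE A U n X :=
  resLE_of_resDim_le <| le_trans
    (le_iSup₂ (f := fun (M : ModuleCat.{u} A) (_ : resDim A U M ≠ ⊤) => resDim A U M) X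
      (ne_top_of_le_ne_top (ENat.natCast_ne_top m) (resDim_le_of_resLE hX))) hf

lemma coresLE_of_injective_iterCosyzygy :
    ∀ {n : ℕ} {X : ModuleCat.{u} A}, Injective (iterCosyzygy n X) →
      CoresLE A (injClass A) n X
  | 0, _, h => h
  | _ + 1, X, h =>
    have hX := isShortExact_cosyzygy X
    Or.inr ⟨_, _, _, _, Injective.injective_under X, hX.injective, hX.surjective,
      hX.range_eq_ker, coresLE_of_injective_iterCosyzygy h⟩

lemma idim_le_of_coresLE (h : CoresLE A (injClass A) n X) : idim A X ≤ n :=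
  sInf_le ⟨n, rfl, h⟩

end Dimension

namespace IsCotorsionPair

variable {U V : Set (ModuleCat.{u} A)} (hpair : IsCotorsionPair A U V)
include hpair

lemma ext1Zero {M Y : ModuleCat.{u} A} (hM : M ∈ U) (hY : Y ∈ V) : Ext1Zero A M Y :=
  (hpair.1 ▸ hM : M ∈ {M | ∀ N ∈ V, Ext1Zero A M N}) Y hY

lemma mem_left {M : ModuleCat.{u} A} (h : ∀ Y ∈ V, Ext1Zero A M Y) : M ∈ U :=
  hpair.1 ▸ h

lemma mem_right {Y : ModuleCat.{u} A} (h : ∀ M ∈ U, Ext1Zero A M Y) : Y ∈ V :=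
  hpair.2 ▸ h

variable (hhered : IsHereditaryPair A U V)
include hhered

lemma cosyzygy_mem {Y : ModuleCat.{u} A} (hY : Y ∈ V) : cosyzygy Y ∈ V :=
  hpair.mem_right fun M hM =>
    let P : ProjectiveResolution M := HasProjectiveResolution.out.some
    (isShortExact_syzygy P).ext1Zero_cosyzygy_right (hhered M hM Y hY 1 P)
      (ext1Zero_of_projective _)

lemma iterCosyzygy_mem (n : ℕ) {Y : ModuleCat.{u} A} (hY : Y ∈ V) : iterCosyzygy n Y ∈ V := by
  induction n with
  | zero => exact hY
  | succ n ih => exact iterCosyzygy_succ n Y ▸ hpair.cosyzygy_mem hhered ih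

lemma ext1Zero_iterCosyzygy_of_resLE :
    ∀ {n : ℕ} {X : ModuleCat.{u} A}, ResLE A U n X →
      ∀ Y ∈ V, Ext1Zero A X (iterCosyzygy n Y)
  | 0, _, hX, _, hY => hpair.ext1Zero hX hY
  | _ + 1, _, Or.inl hX, Y, hY =>
    ext1Zero_iterCosyzygy_of_resLE hX _ (hpair.cosyzygy_mem hhered hY)
  | n + 1, _, Or.inr ⟨_, _, _, _, hU₀, hj, hp, hjp, hK⟩, Y, hY => by
    rw [iterCosyzygy_succ]
    exact IsShortExact.ext1Zero_cosyzygy_right ⟨hj, hp, hjp⟩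
      (ext1Zero_iterCosyzygy_of_resLE hK Y hY)
      (iterCosyzygy_succ n Y ▸ hpair.ext1Zero hU₀ (hpair.iterCosyzygy_mem hhered (n + 1) hY))

lemma resLE_of_ext1Zero_iterCosyzygy (hcomplete : IsCompletePair A U V) :
    ∀ {n : ℕ} {X : ModuleCat.{u} A}, (∀ Y ∈ V, Ext1Zero A X (iterCosyzygy n Y)) →
      ResLE A U n X
  | 0, _, h => hpair.mem_left h
  | n + 1, X, h => by
    obtain ⟨K, U₀, j, p, hU₀, -, hj, hp, hjp⟩ := hcomplete.1 X
    refine Or.inr ⟨K, U₀, j, p, hU₀, hj, hp, hjp,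
      resLE_of_ext1Zero_iterCosyzygy hcomplete fun Y hY => ?_⟩
    exact IsShortExact.ext1Zero_left ⟨hj, hp, hjp⟩
      (hpair.ext1Zero hU₀ (hpair.iterCosyzygy_mem hhered n hY)) (iterCosyzygy_succ n Y ▸ h Y hY)

lemma resLE_of_isShortExact (hcomplete : IsCompletePair A U V) {X J C : ModuleCat.{u} A}
    {i : X ⟶ J} {p : J ⟶ C} (h : IsShortExact i p) {a b : ℕ} (hX : ResLE A U a X)
    (hJ : ResLE A U b J) : ResLE A U (max a b + 1) C :=
  hpair.resLE_of_ext1Zero_iterCosyzygy hhered hcomplete fun Y hY => by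
    rw [iterCosyzygy_succ]
    refine h.ext1Zero_cosyzygy_right
      (hpair.ext1Zero_iterCosyzygy_of_resLE hhered (hX.mono (le_max_left a b)) Y hY) ?_
    rw [← iterCosyzygy_succ]
    exact hpair.ext1Zero_iterCosyzygy_of_resLE hhered
      (hJ.mono ((le_max_right a b).trans (Nat.le_succ _))) Y hY

lemma exists_resLE_iterCosyzygy (hcomplete : IsCompletePair A U V) {s : ℕ}
    (hs : relspli A U ≤ s) {X : ModuleCat.{u} A} {a : ℕ} (hX : ResLE A U a X) :
    ∀ k, ∃ n, ResLE A U n (iterCosyzygy k X)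
  | 0 => ⟨a, hX⟩
  | k + 1 =>
    let ⟨_, hn⟩ := exists_resLE_iterCosyzygy hcomplete hs hX k
    ⟨_, iterCosyzygy_succ k X ▸ hpair.resLE_of_isShortExact hhered hcomplete
      (isShortExact_cosyzygy _) hn (resLE_of_injective_of_relspli_le hs)⟩

end IsCotorsionPair

end

theorem stmt_5_general (A : Type u) [Ring A] (U V : Set (ModuleCat.{u} A))
    (hpair : IsCotorsionPair A U V) (hcomplete : IsCompletePair A U V)
    (hhered : IsHereditaryPair A U V)
    (N : ModuleCat.{u} A) (hN : N ∈ V) (hfin : resDim A U N ≠ ⊤) :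
    idim A N ≤ max (relspli A U) (relFPD A U) := by
  by_cases htop : max (relspli A U) (relFPD A U) = ⊤
  · exact htop ▸ le_top
  obtain ⟨s, hs⟩ := ENat.ne_top_iff_exists.1 (ne_top_of_le_ne_top htop (le_max_left _ _))
  obtain ⟨f, hf⟩ := ENat.ne_top_iff_exists.1 (ne_top_of_le_ne_top htop (le_max_right _ _))
  set m := max s f
  obtain ⟨a, ha⟩ := exists_resLE_of_resDim_ne_top hfin
  obtain ⟨b, hb⟩ := hpair.exists_resLE_iterCosyzygy hhered hcomplete hs.ge ha (m + 1)
  have hm : ResLE A U m (iterCosyzygy (m + 1) N) :=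
    (resLE_of_relFPD_le hf.ge hb).mono (le_max_right s f)
  have hsplit : Ext1Zero A (cosyzygy (iterCosyzygy m N)) (iterCosyzygy m N) :=
    iterCosyzygy_succ m N ▸ hpair.ext1Zero_iterCosyzygy_of_resLE hhered hm N hN
  calc idim A N ≤ m :=
        idim_le_of_coresLE (coresLE_of_injective_iterCosyzygy
          (injective_of_ext1Zero_cosyzygy hsplit))
    _ = max (relspli A U) (relFPD A U) := by rw [← hs, ← hf]; exact Nat.mono_cast.map_max

/-- Modules in `V` of finite `U`-projective dimension have injective dimension
bounded by `max{relspli(U), relFPD(U)}`. -/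
theorem stmt_5 (A : Type u) [Ring A] (U V : Set (ModuleCat.{u} A))
    (hpair : IsCotorsionPair A U V) (hcomplete : IsCompletePair A U V)
    (hhered : IsHereditaryPair A U V) (hwrp : WeaklyRightPeriodic A V)
    (N : ModuleCat.{u} A) (hN : N ∈ V) (hfin : resDim A U N ≠ ⊤) :
    idim A N ≤ max (relspli A U) (relFPD A U) :=
  stmt_5_general A U V hpair hcomplete hhered N hN hfin

end OSG
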